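/- Suppose each local objective L_u (u = 1, …, U) is differentiable, convex, and L-smooth, and let L = (1/U)·∑_{u=1}^U L_u. Let each client run E steps of local gradient descent with stepsize η > 0 from the common starting point W. Then for every point W* in E: (1/U)·∑_{u=1}^U ∑_{e=0}^{E−1} ⟨W − W*, ∇L_u(W_u^(e))⟩ ≥ E·(L(W) − L(W*)) − (L/(2U))·∑_{u=1}^U ∑_{e=0}^{E−1} ‖W − W_u^(e)‖². -/

import Mathlib

/-!
Fix a client `u` and a step `e`, and put `x = W_u^(e)`. The first-order characterisation of
convexity, `L_u(W*) ≥ L_u(x) + ⟪∇L_u(x), W* − x⟫`, together with the descent lemma for the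
`L`-smooth `L_u`, `L_u(W) ≤ L_u(x) + ⟪∇L_u(x), W − x⟫ + (L/2)‖W − x‖²`, gives
`⟪W − W*, ∇L_u(x)⟫ ≥ L_u(W) − L_u(W*) − (L/2)‖W − x‖²` at every point `x` whatsoever.
Summing over `e < E` and averaging over `u` yields the bound.
-/

open scoped RealInnerProductSpace

section

variable {E : Type*} [NormedAddCommGroup E] [InnerProductSpace ℝ E] [CompleteSpace E]
  {f : E → ℝ} {g x v : E} {L : ℝ}

theorem HasGradientAt.hasDerivAt_comp_add_smul {t : ℝ} (hf : HasGradientAt f g (x + t • v)) :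
    HasDerivAt (fun s : ℝ => f (x + s • v)) ⟪g, v⟫ t := by
  have hline : HasDerivAt (fun s : ℝ => x + s • v) v t := by
    simpa using ((hasDerivAt_id t).smul_const v).const_add x
  exact (hasGradientAt_iff_hasFDerivAt.mp hf).comp_hasDerivAt t hline

theorem ConvexOn.add_inner_le_of_hasGradientAt {s : Set E} {y : E} (hc : ConvexOn ℝ s f)
    (hx : x ∈ s) (hy : y ∈ s) (hf : HasGradientAt f g x) :
    f x + ⟪g, y - x⟫ ≤ f y := by
  let line : ℝ →ᵃ[ℝ] E := AffineMap.lineMap x y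
  have hline : ∀ t : ℝ, line t = x + t • (y - x) := fun t => by
    rw [AffineMap.lineMap_apply_module', add_comm]
  have hconv : ConvexOn ℝ (line ⁻¹' s) (fun t => f (x + t • (y - x))) := by
    simpa only [Function.comp_def, hline] using hc.comp_affineMap line
  have hderiv : HasDerivAt (fun t : ℝ => f (x + t • (y - x))) ⟪g, y - x⟫ 0 :=
    HasGradientAt.hasDerivAt_comp_add_smul (by simpa using hf)
  have hslope := hconv.le_slope_of_hasDerivAt (by simpa [line] using hx)
    (by simpa [line] using hy) one_pos hderiv
  simp only [slope_def_field, one_smul, zero_smul, add_zero, add_sub_cancel, sub_zero,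
    div_one] at hslope
  linarith

theorem le_add_inner_gradient_add_half_mul_sq (hf : Differentiable ℝ f)
    (hs : ∀ z, ‖gradient f z - gradient f x‖ ≤ L * ‖z - x‖) (y : E) :
    f y ≤ f x + ⟪gradient f x, y - x⟫ + L / 2 * ‖y - x‖ ^ 2 := by
  set v := y - x
  set φ : ℝ → ℝ := fun t => f (x + t • v) - t * ⟪gradient f x, v⟫ - L / 2 * ‖v‖ ^ 2 * t ^ 2
  have hderiv (t : ℝ) : HasDerivAt φ
      (⟪gradient f (x + t • v), v⟫ - ⟪gradient f x, v⟫ - L * t * ‖v‖ ^ 2) t := by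
    have hquad : HasDerivAt (fun t : ℝ => L / 2 * ‖v‖ ^ 2 * t ^ 2) (L * t * ‖v‖ ^ 2) t :=
      ((hasDerivAt_pow 2 t).const_mul _).congr_deriv (by push_cast; ring)
    exact (((hf _).hasGradientAt.hasDerivAt_comp_add_smul).sub (hasDerivAt_mul_const _)).sub hquad
  have hanti : AntitoneOn φ (Set.Ici 0) := by
    refine antitoneOn_of_hasDerivWithinAt_nonpos (convex_Ici 0)
      (fun t _ => (hderiv t).continuousAt.continuousWithinAt)
      (fun t _ => (hderiv t).hasDerivWithinAt) fun t ht => ?_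
    rw [interior_Ici, Set.mem_Ioi] at ht
    have hgrad : ⟪gradient f (x + t • v) - gradient f x, v⟫ ≤ L * t * ‖v‖ ^ 2 :=
      calc ⟪gradient f (x + t • v) - gradient f x, v⟫
          ≤ ‖gradient f (x + t • v) - gradient f x‖ * ‖v‖ := real_inner_le_norm _ _
        _ ≤ L * ‖x + t • v - x‖ * ‖v‖ := by gcongr; exact hs _
        _ = L * t * ‖v‖ ^ 2 := by
          rw [add_sub_cancel_left, norm_smul, Real.norm_of_nonneg ht.le]
          ring
    rw [inner_sub_left] at hgrad
    linarith
  have h01 := hanti Set.self_mem_Ici (Set.mem_Ici.mpr zero_le_one) zero_le_one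
  simp only [φ, zero_smul, add_zero, zero_mul, sub_zero, one_smul, one_mul, one_pow,
    mul_one, ne_eq, OfNat.ofNat_ne_zero, not_false_eq_true, zero_pow] at h01
  rw [show x + v = y from add_sub_cancel x y] at h01
  linarith

theorem ConvexOn.sub_le_inner_gradient_add_half_mul_sq (hf : Differentiable ℝ f)
    (hc : ConvexOn ℝ Set.univ f) (hs : ∀ z, ‖gradient f z - gradient f x‖ ≤ L * ‖z - x‖)
    (w w' : E) :
    f w - f w' ≤ ⟪w - w', gradient f x⟫ + L / 2 * ‖w - x‖ ^ 2 := by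
  have hlower := hc.add_inner_le_of_hasGradientAt (Set.mem_univ x) (Set.mem_univ w')
    (hf x).hasGradientAt
  have hupper := le_add_inner_gradient_add_half_mul_sq hf hs w
  have hsplit : ⟪w - w', gradient f x⟫ = ⟪gradient f x, w - x⟫ - ⟪gradient f x, w' - x⟫ := by
    rw [real_inner_comm, ← inner_sub_right, sub_sub_sub_cancel_right]
  linarith

end

theorem avg_inner_product_lower_bound_general
    {E : Type*} [NormedAddCommGroup E] [InnerProductSpace ℝ E] [CompleteSpace E]
    (U : ℕ) (Lf : Fin U → E → ℝ) (L : ℝ)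
    (hdiff : ∀ u, Differentiable ℝ (Lf u))
    (hconv : ∀ u, ConvexOn ℝ Set.univ (Lf u))
    (hsmooth : ∀ u, ∀ x y : E, ‖gradient (Lf u) x - gradient (Lf u) y‖ ≤ L * ‖x - y‖)
    (Lg : E → ℝ) (hLg : ∀ x : E, Lg x = ((1 : ℝ) / U) * ∑ u, Lf u x)
    (N : ℕ)
    (W : E) (Wseq : Fin U → ℕ → E) :
    ∀ Wstar : E,
      (N : ℝ) * (Lg W - Lg Wstar) -
          (L / (2 * U)) * ∑ u, ∑ e ∈ Finset.range N, ‖W - Wseq u e‖ ^ 2 ≤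
        ((1 : ℝ) / U) *
          ∑ u, ∑ e ∈ Finset.range N, ⟪W - Wstar, gradient (Lf u) (Wseq u e)⟫ := by
  intro Wstar
  have hsum : ∑ u, ∑ e ∈ Finset.range N,
        (Lf u W - Lf u Wstar - L / 2 * ‖W - Wseq u e‖ ^ 2) ≤
      ∑ u, ∑ e ∈ Finset.range N, ⟪W - Wstar, gradient (Lf u) (Wseq u e)⟫ :=
    Finset.sum_le_sum fun u _ => Finset.sum_le_sum fun e _ => by
      linarith [(hconv u).sub_le_inner_gradient_add_half_mul_sq (hdiff u)
        (fun z => hsmooth u z (Wseq u e)) W Wstar]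
  calc (N : ℝ) * (Lg W - Lg Wstar) -
          (L / (2 * U)) * ∑ u, ∑ e ∈ Finset.range N, ‖W - Wseq u e‖ ^ 2
      = (1 / U) * ∑ u, ∑ e ∈ Finset.range N,
          (Lf u W - Lf u Wstar - L / 2 * ‖W - Wseq u e‖ ^ 2) := by
        simp only [Finset.sum_sub_distrib, Finset.sum_const, Finset.card_range, nsmul_eq_mul,
          ← Finset.mul_sum, hLg]
        ring
    _ ≤ _ := mul_le_mul_of_nonneg_left hsum (by positivity)

/-- Lower bound on the averaged inner products between `W − W*` and the local gradients
along the local GD trajectories, in terms of the global suboptimality and the client drift. -/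
theorem avg_inner_product_lower_bound
    {E : Type*} [NormedAddCommGroup E] [InnerProductSpace ℝ E] [CompleteSpace E]
    (U : ℕ) (hU : 0 < U) (Lf : Fin U → E → ℝ) (L : ℝ) (hL : 0 < L)
    (hdiff : ∀ u, Differentiable ℝ (Lf u))
    (hconv : ∀ u, ConvexOn ℝ Set.univ (Lf u))
    (hsmooth : ∀ u, ∀ x y : E, ‖gradient (Lf u) x - gradient (Lf u) y‖ ≤ L * ‖x - y‖)
    (Lg : E → ℝ) (hLg : ∀ x : E, Lg x = ((1 : ℝ) / U) * ∑ u, Lf u x)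
    (η : ℝ) (hη0 : 0 < η)
    (N : ℕ) (hN : 1 ≤ N)
    (W : E) (Wseq : Fin U → ℕ → E)
    (hW0 : ∀ u, Wseq u 0 = W)
    (hstep : ∀ u e, Wseq u (e + 1) = Wseq u e - η • gradient (Lf u) (Wseq u e)) :
    ∀ Wstar : E,
      (N : ℝ) * (Lg W - Lg Wstar) -
          (L / (2 * U)) * ∑ u, ∑ e ∈ Finset.range N, ‖W - Wseq u e‖ ^ 2 ≤
        ((1 : ℝ) / U) *
          ∑ u, ∑ e ∈ Finset.range N, ⟪W - Wstar, gradient (Lf u) (Wseq u e)⟫ :=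
  avg_inner_product_lower_bound_general U Lf L hdiff hconv hsmooth Lg hLg N W Wseq
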